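/- (Local convergence.) Let Ω be a set of index pairs of m×n complex matrices, let M be an m×n complex matrix, and let C be a set of m×n complex matrices. Let X : ℕ → (m×n complex matrices) be a sequence with X 0 ∈ C and such that for every k, X (k+1) ∈ C and ‖X (k+1) − G_k‖_F ≤ ‖Z − G_k‖_F for every Z ∈ C, where G_k := X k − P_Ω (X k − M). Then the error sequence ε k := ‖P_Ω (X k) − P_Ω M‖_F is monotonically decreasing (ε (k+1) ≤ ε k for all k) and converges: there exists L ≥ 0 such that ε k tends to L as k → ∞. -/
import Mathlib


open Matrix Filter

/-- Frobenius norm of a complex matrix. -/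
noncomputable def frobNorm {m n : ℕ} (A : Matrix (Fin m) (Fin n) ℂ) : ℝ :=
  Real.sqrt (∑ i, ∑ j, ‖A i j‖ ^ 2)

open Classical in
/-- The mask operator `P_Ω`: keeps entries in `Ω` and zeroes out the rest. -/
noncomputable def maskOp {m n : ℕ} (Ω : Set (Fin m × Fin n))
    (A : Matrix (Fin m) (Fin n) ℂ) : Matrix (Fin m) (Fin n) ℂ :=
  fun i j => if (i, j) ∈ Ω then A i j else 0

lemma maskOp_sub {m n : ℕ} (Ω : Set (Fin m × Fin n))
    (A B : Matrix (Fin m) (Fin n) ℂ) :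
    maskOp Ω (A - B) = maskOp Ω A - maskOp Ω B := by
  funext i j
  simp only [maskOp, Matrix.sub_apply]
  split <;> simp

lemma maskOp_idem {m n : ℕ} (Ω : Set (Fin m × Fin n))
    (A : Matrix (Fin m) (Fin n) ℂ) :
    maskOp Ω (maskOp Ω A) = maskOp Ω A := by
  funext i j
  simp only [maskOp]
  split <;> simp_all

lemma frobNorm_nonneg {m n : ℕ} (A : Matrix (Fin m) (Fin n) ℂ) :
    0 ≤ frobNorm A := Real.sqrt_nonneg _

lemma frobNorm_mask_le {m n : ℕ} (Ω : Set (Fin m × Fin n))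
    (A : Matrix (Fin m) (Fin n) ℂ) :
    frobNorm (maskOp Ω A) ≤ frobNorm A := by
  apply Real.sqrt_le_sqrt
  apply Finset.sum_le_sum
  intro i _
  apply Finset.sum_le_sum
  intro j _
  simp only [maskOp]
  split
  · exact le_refl _
  · simp

/-- **Local convergence.** If `X (k+1) ∈ C` is a best Frobenius-norm approximation
from `C` to the gradient step `G_k := X k − P_Ω (X k − M)` at every iteration, then
the error sequence `ε k := ‖P_Ω (X k) − P_Ω M‖_F` is monotonically decreasing and
converges to some limit `L ≥ 0`. -/
theorem stmt_13 {m n : ℕ} (Ω : Set (Fin m × Fin n))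
    (M : Matrix (Fin m) (Fin n) ℂ) (C : Set (Matrix (Fin m) (Fin n) ℂ))
    (X : ℕ → Matrix (Fin m) (Fin n) ℂ) (hX0 : X 0 ∈ C)
    (hstep : ∀ k, X (k + 1) ∈ C ∧
      ∀ Z ∈ C, frobNorm (X (k + 1) - (X k - maskOp Ω (X k - M))) ≤
        frobNorm (Z - (X k - maskOp Ω (X k - M)))) :
    (∀ k, frobNorm (maskOp Ω (X (k + 1)) - maskOp Ω M) ≤
        frobNorm (maskOp Ω (X k) - maskOp Ω M)) ∧
      ∃ L : ℝ, 0 ≤ L ∧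
        Tendsto (fun k => frobNorm (maskOp Ω (X k) - maskOp Ω M)) atTop (nhds L) := by
  have hmem : ∀ k, X k ∈ C := by
    intro k
    cases k with
    | zero => exact hX0
    | succ k => exact (hstep k).1
  have key : ∀ k, frobNorm (maskOp Ω (X (k + 1)) - maskOp Ω M) ≤
      frobNorm (maskOp Ω (X k) - maskOp Ω M) := by
    intro k
    set G := X k - maskOp Ω (X k - M) with hG
    have hGM : maskOp Ω (G - M) = 0 := by
      rw [hG, sub_right_comm, maskOp_sub, maskOp_idem, sub_self]
    have h1 : maskOp Ω (X (k + 1)) - maskOp Ω M = maskOp Ω (X (k + 1) - G) := by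
      rw [maskOp_sub]
      have : maskOp Ω G = maskOp Ω M := by
        have := hGM
        rw [maskOp_sub, sub_eq_zero] at this
        exact this
      rw [this, ← maskOp_sub, maskOp_sub]
    have h2 : X k - G = maskOp Ω (X k - M) := by rw [hG]; abel
    calc frobNorm (maskOp Ω (X (k + 1)) - maskOp Ω M)
        = frobNorm (maskOp Ω (X (k + 1) - G)) := by rw [h1]
      _ ≤ frobNorm (X (k + 1) - G) := frobNorm_mask_le _ _
      _ ≤ frobNorm (X k - G) := (hstep k).2 (X k) (hmem k)
      _ = frobNorm (maskOp Ω (X k - M)) := by rw [h2]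
      _ = frobNorm (maskOp Ω (X k) - maskOp Ω M) := by rw [maskOp_sub]
  refine ⟨key, ?_⟩
  have hanti : Antitone fun k => frobNorm (maskOp Ω (X k) - maskOp Ω M) :=
    antitone_nat_of_succ_le key
  have hbdd : BddBelow (Set.range fun k => frobNorm (maskOp Ω (X k) - maskOp Ω M)) :=
    ⟨0, by rintro x ⟨k, rfl⟩; exact frobNorm_nonneg _⟩
  refine ⟨⨅ k, frobNorm (maskOp Ω (X k) - maskOp Ω M), ?_, ?_⟩
  · exact le_ciInf fun k => frobNorm_nonneg _
  · exact tendsto_atTop_ciInf hanti hbdd
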